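/- Let σ:X→X be a homeomorphism of a compact metric space. For ε,δ>0 let P_{ε,δ} be the set of x∈X for which there exists N such that for all n>N there is an integer k with n(1+ε)<k<n(1+2ε) and dist(x, σ^k x)<δ. Then for every σ-invariant Borel probability measure μ, μ(P_{ε,δ})=1. -/

import Mathlib

open MeasureTheory Set Filter Function Topology

/-!
Fix a measurable set `B` of diameter `< δ`, and let `τ_B` be the first return time to `B`.
Kac's inequality `∑ₙ μ(B ∩ {τ_B > n}) ≤ 1` makes `∑ₘ μ(σ⁻ᵐ(B ∩ {τ_B > m / K}))` finite, so by
Borel–Cantelli almost every orbit, from some time on, comes back to `B` within `m / K` steps of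
each visit at a time `m`. Together with Poincaré recurrence this puts a visit to `B` in every
window `(n(1+ε), n(1+2ε))` for large `n` as soon as `K > (1+ε)/ε`. Countably many such `B`
cover `X`.
-/

theorem exists_window_of_frequently_of_eventually_gap {p : ℕ → Prop} {ε : ℝ} (hε : 0 < ε)
    {K : ℕ} (hK : (1 + ε) / ε < K) (hfreq : ∃ᶠ m in atTop, p m)
    (hgap : ∀ᶠ m in atTop, p m → ∃ k, m < k ∧ k ≤ m + m / K ∧ p k) :
    ∃ N : ℕ, ∀ n : ℕ, n > N →
      ∃ k : ℕ, (n : ℝ) * (1 + ε) < k ∧ (k : ℝ) < (n : ℝ) * (1 + 2 * ε) ∧ p k := by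
  classical
  obtain ⟨M, hM⟩ := eventually_atTop.1 hgap
  obtain ⟨m₀, hm₀M, hm₀⟩ := frequently_atTop.1 hfreq M
  refine ⟨m₀, fun n hn => ?_⟩
  have hn' : (m₀ : ℝ) < n := by exact_mod_cast hn
  have hwindow : (0 : ℝ) ≤ n * (1 + ε) := by positivity
  set b := ⌊(n : ℝ) * (1 + ε)⌋₊
  have hm₀b : m₀ ≤ b := Nat.le_floor (by nlinarith)
  -- `m` is the last time in `p` before the window opens; the gap bound after it lands in the window.
  set m := Nat.findGreatest p b
  obtain ⟨k, hmk, hkm, hk⟩ := hM m (hm₀M.trans (Nat.le_findGreatest hm₀b hm₀))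
    (Nat.findGreatest_spec hm₀b hm₀)
  refine ⟨k, Nat.lt_of_floor_lt (not_le.1 fun hkb => Nat.findGreatest_is_greatest hmk hkb hk),
    ?_, hk⟩
  have hmn : (m : ℝ) ≤ n * (1 + ε) :=
    (Nat.cast_le.2 (Nat.findGreatest_le b)).trans (Nat.floor_le hwindow)
  have hKpos : (0 : ℝ) < K := lt_trans (by positivity) hK
  have hKε : 1 + ε < K * ε := by rwa [div_lt_iff₀ hε] at hK
  have hgap_small : (m : ℝ) / K < n * ε := by
    rw [div_lt_iff₀ hKpos]
    nlinarith
  have hkm' : (k : ℝ) ≤ m + (m / K : ℕ) := by exact_mod_cast hkm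
  linarith [(Nat.cast_div_le : ((m / K : ℕ) : ℝ) ≤ m / K)]

theorem ENNReal.tsum_comp_nat_div (a : ℕ → ENNReal) (K : ℕ) [NeZero K] :
    ∑' m, a (m / K) = K * ∑' g, a g := by
  have hdiv (q : ℕ) (r : Fin K) : (K * q + r) / K = q := by
    rw [Nat.mul_add_div (NeZero.pos K), Nat.div_eq_of_lt r.isLt, add_zero]
  rw [← (Nat.divModEquiv K).symm.tsum_eq, ENNReal.tsum_prod', ← ENNReal.tsum_mul_left]
  simp [Nat.divModEquiv, hdiv, mul_comm]

section NoReturn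

variable {X : Type*} {f : X → X} {B : Set X}

def noReturnWithin (f : X → X) (B : Set X) (g : ℕ) : Set X :=
  B ∩ ⋂ j ∈ Icc 1 g, f^[j] ⁻¹' Bᶜ

@[simp]
theorem mem_noReturnWithin {g : ℕ} {x : X} :
    x ∈ noReturnWithin f B g ↔ x ∈ B ∧ ∀ j, 1 ≤ j → j ≤ g → f^[j] x ∉ B := by
  simp [noReturnWithin]

/-- A point of the first set visits `B` at time `G - g`, inside the window `(G - g', G]`
in which points of the second set do not. -/
theorem disjoint_preimage_noReturnWithin {g g' G : ℕ} (hgg' : g < g') (hg'G : g' ≤ G) :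
    Disjoint (f^[G - g] ⁻¹' noReturnWithin f B g) (f^[G - g'] ⁻¹' noReturnWithin f B g') := by
  refine disjoint_left.2 fun x hx hx' => ?_
  have hvisit : f^[G - g] x ∈ B := (mem_noReturnWithin.1 hx).1
  have hno := (mem_noReturnWithin.1 hx').2 (g' - g) (by omega) (Nat.sub_le g' g)
  rw [← iterate_add_apply, show g' - g + (G - g') = G - g by omega] at hno
  exact hno hvisit

variable [MeasurableSpace X] {μ : Measure X}

theorem measurableSet_noReturnWithin (hf : Measurable f) (hB : MeasurableSet B) (g : ℕ) :
    MeasurableSet (noReturnWithin f B g) :=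
  hB.inter (.biInter (to_countable _) fun j _ => hf.iterate j hB.compl)

/-- Kac's inequality in the form `∑ₙ μ(τ_B > n, B) ≤ μ X`, for `τ_B` the first return time. -/
theorem tsum_measure_noReturnWithin_le (hf : MeasurePreserving f μ μ) (hB : MeasurableSet B) :
    ∑' g, μ (noReturnWithin f B g) ≤ μ univ := by
  refine ENNReal.tsum_le_of_sum_range_le fun G => ?_
  have hmeas : ∀ g, MeasurableSet (noReturnWithin f B g) :=
    measurableSet_noReturnWithin hf.measurable hB
  have hdisj :
      PairwiseDisjoint (↑(Finset.range G)) fun g => f^[G - g] ⁻¹' noReturnWithin f B g := by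
    intro g hg g' hg' hne
    have hg : g ≤ G := (Finset.mem_range.1 hg).le
    have hg' : g' ≤ G := (Finset.mem_range.1 hg').le
    rcases hne.lt_or_gt with h | h
    · exact disjoint_preimage_noReturnWithin h hg'
    · exact (disjoint_preimage_noReturnWithin h hg).symm
  calc ∑ g ∈ Finset.range G, μ (noReturnWithin f B g)
      = ∑ g ∈ Finset.range G, μ (f^[G - g] ⁻¹' noReturnWithin f B g) := by
        simp only [(hf.iterate _).measure_preimage (hmeas _).nullMeasurableSet]
    _ = μ (⋃ g ∈ Finset.range G, f^[G - g] ⁻¹' noReturnWithin f B g) :=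
        (measure_biUnion_finset hdisj fun g _ => hf.measurable.iterate _ (hmeas g)).symm
    _ ≤ μ univ := measure_mono (subset_univ _)

theorem ae_eventually_return_within_div [IsFiniteMeasure μ] (hf : MeasurePreserving f μ μ)
    (hB : MeasurableSet B) {K : ℕ} (hK : K ≠ 0) :
    ∀ᵐ x ∂μ, ∀ᶠ m in atTop, f^[m] x ∈ B → ∃ k, m < k ∧ k ≤ m + m / K ∧ f^[k] x ∈ B := by
  have : NeZero K := ⟨hK⟩
  have hmeas : ∀ g, MeasurableSet (noReturnWithin f B g) :=
    measurableSet_noReturnWithin hf.measurable hB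
  have hsum : ∑' m, μ (f^[m] ⁻¹' noReturnWithin f B (m / K)) ≠ ⊤ := by
    simp only [(hf.iterate _).measure_preimage (hmeas _).nullMeasurableSet]
    rw [ENNReal.tsum_comp_nat_div (fun g => μ (noReturnWithin f B g))]
    exact ENNReal.mul_ne_top (ENNReal.natCast_ne_top K)
      (ne_top_of_le_ne_top (measure_ne_top μ univ) (tsum_measure_noReturnWithin_le hf hB))
  filter_upwards [ae_eventually_notMem hsum] with x hx
  refine hx.mono fun m hm hmB => ?_
  simp only [mem_preimage, mem_noReturnWithin, not_and, not_forall, not_not] at hm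
  obtain ⟨j, hj1, hjm, hj⟩ := hm hmB
  exact ⟨j + m, by omega, by omega, by rwa [iterate_add_apply]⟩

theorem ae_exists_window_return [IsFiniteMeasure μ] (hf : MeasurePreserving f μ μ)
    (hB : MeasurableSet B) {ε : ℝ} (hε : 0 < ε) :
    ∀ᵐ x ∂μ, x ∈ B → ∃ N : ℕ, ∀ n : ℕ, n > N →
      ∃ k : ℕ, (n : ℝ) * (1 + ε) < k ∧ (k : ℝ) < (n : ℝ) * (1 + 2 * ε) ∧ f^[k] x ∈ B := by
  obtain ⟨K, hK⟩ := exists_nat_gt ((1 + ε) / ε)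
  have hK0 : K ≠ 0 := (Nat.cast_pos.1 (lt_trans (by positivity) hK)).ne'
  filter_upwards [hf.conservative.ae_mem_imp_frequently_image_mem hB.nullMeasurableSet,
    ae_eventually_return_within_div hf hB hK0] with x hrec hgap hxB
  exact exists_window_of_frequently_of_eventually_gap hε hK (hrec hxB) hgap

end NoReturn

theorem ae_of_forall_nhds_ae {X : Type*} [MeasurableSpace X] [TopologicalSpace X]
    [SecondCountableTopology X] {μ : Measure X} {p : X → Prop}
    (h : ∀ x, ∃ u ∈ 𝓝 x, ∀ᵐ y ∂μ, y ∈ u → p y) : ∀ᵐ y ∂μ, p y := by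
  refine ae_iff.2 (measure_null_of_locally_null _ fun x _ => ?_)
  obtain ⟨u, hu, hae⟩ := h x
  refine ⟨{y | ¬p y} ∩ u, inter_mem_nhdsWithin _ hu, measure_eq_zero_iff_ae_notMem.2 ?_⟩
  filter_upwards [hae] with y hy ⟨hyp, hyu⟩ using hyp (hy hyu)

/-- For a homeomorphism `σ` of a compact metric space and any invariant Borel
probability measure `μ`, the set `P_{ε,δ}` of points returning `δ`-close to themselves
at some time `k` with `n(1+ε) < k < n(1+2ε)` for all large `n` has full measure. -/
theorem almost_every_point_returns {X : Type*} [MetricSpace X] [CompactSpace X]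
    [MeasurableSpace X] [BorelSpace X]
    (σ : X ≃ₜ X) (μ : Measure X) [IsProbabilityMeasure μ]
    (hinv : MeasurePreserving (⇑σ) μ μ)
    (ε δ : ℝ) (hε : 0 < ε) (hδ : 0 < δ) :
    μ {x : X | ∃ N : ℕ, ∀ n : ℕ, n > N →
        ∃ k : ℕ, (n : ℝ) * (1 + ε) < k ∧ (k : ℝ) < (n : ℝ) * (1 + 2 * ε) ∧
          dist x ((⇑σ)^[k] x) < δ} = 1 := by
  refine (measure_congr (eventuallyEq_univ.2 ?_)).trans measure_univ
  refine ae_of_forall_nhds_ae fun c =>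
    ⟨Metric.ball c (δ / 2), Metric.ball_mem_nhds c (half_pos hδ), ?_⟩
  filter_upwards [ae_exists_window_return hinv Metric.isOpen_ball.measurableSet hε]
    with x hx hxc
  obtain ⟨N, hN⟩ := hx hxc
  refine ⟨N, fun n hn => ?_⟩
  obtain ⟨k, hlow, hup, hkc⟩ := hN n hn
  exact ⟨k, hlow, hup, (dist_triangle_right _ _ c).trans_lt
    (by linarith [Metric.mem_ball.1 hxc, Metric.mem_ball.1 hkc])⟩
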